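/- arXiv:2201.06634 — 2 statements merged into one kernel-verified Lean document; each statement's English description precedes it below -/
import Mathlib

section
/- Let H be an ℵ₁-free abelian group of cardinality ℵ₁ and let {H_α : α < ω₁} be an ℵ₁-filtration of H, with E = {α < ω₁ : H/H_α is not ℵ₁-free}. If E contains a club in ω₁ (i.e., H is turbid), then H is not a free abelian group. -/
/-- An abelian group is ℵ₁-free if every countable subgroup is free (as a ℤ-module). -/
def Aleph1Free (H : Type*) [AddCommGroup H] : Prop :=
  ∀ K : AddSubgroup H, Countable K → Module.Free ℤ K

/-- The first uncountable ordinal ω₁. -/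
noncomputable def omega1 : Ordinal := (Cardinal.aleph 1).ord

/-- `C` is a club in `o`: a subset of `o` closed under suprema of its bounded
nonempty subsets and unbounded in `o`. -/
def IsClubIn (C : Set Ordinal) (o : Ordinal) : Prop :=
  (∀ α ∈ C, α < o) ∧
  (∀ S : Set Ordinal, S ⊆ C → S.Nonempty → (∃ β < o, ∀ x ∈ S, x ≤ β) → sSup S ∈ C) ∧
  (∀ α < o, ∃ β ∈ C, α < β)

/-- `F` (restricted to ordinals `< ω₁`) is an ℵ₁-filtration of `H`. -/
def IsAleph1Filtration {H : Type*} [AddCommGroup H] (F : Ordinal → AddSubgroup H) : Prop :=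
  (∀ α < omega1, Countable (F α)) ∧
  (∀ α β : Ordinal, α ≤ β → β < omega1 → F α ≤ F β) ∧
  (∀ α < omega1, Order.IsSuccLimit α → ∀ x : H, x ∈ F α ↔ ∃ β < α, x ∈ F β) ∧
  (∀ x : H, ∃ α < omega1, x ∈ F α)

/-- The forcing poset of partial bases. -/
def Ppb (H : Type*) [AddCommGroup H] : Set (Set H) :=
  {p | LinearIndependent ℤ ((↑) : p → H) ∧ p.Countable ∧
    Aleph1Free (H ⧸ AddSubgroup.closure p)}

/-!
If `H` were free, enumerating a basis in order type `ω₁` would give a second ℵ₁-filtration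
`G α = ⟨b i : i enumerated before α⟩`, and each `H / G α` is free on the remaining basis
vectors, hence embeds in `H` and is ℵ₁-free. Two ℵ₁-filtrations agree on every limit ordinal
that is closed under the back-and-forth map `α ↦ β` with `F α ≤ G β` and `G α ≤ F β`; such
closure points are found in every club, so the turbid club would contain an `α` with
`H / F α` ℵ₁-free.
-/

open Cardinal Ordinal Order

lemma omega1_eq_omega_one : omega1 = ω₁ :=
  ord_aleph 1

lemma isSuccLimit_omega1 : IsSuccLimit omega1 :=
  omega1_eq_omega_one ▸ isSuccLimit_omega 1

lemma countable_Iio_of_lt_omega1 {α : Ordinal} (hα : α < omega1) : (Set.Iio α).Countable := by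
  rw [← le_aleph0_iff_set_countable, Cardinal.mk_Iio_ordinal, lift_le_aleph0, ← lt_aleph_one_iff,
    ← lt_omega_iff_card_lt, ← omega1_eq_omega_one]
  exact hα

lemma exists_injective_lt_omega1 {ι : Type*} (h : #ι ≤ ℵ₁) :
    ∃ f : ι → Ordinal, Function.Injective f ∧ ∀ i, f i < omega1 := by
  obtain ⟨e⟩ : Nonempty (ι ↪ Set.Iio omega1) := by
    rw [← lift_mk_le', Cardinal.mk_Iio_ordinal, omega1_eq_omega_one, card_omega]
    simpa using h
  exact ⟨fun i => e i, Subtype.val_injective.comp e.injective, fun i => (e i).2⟩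

lemma iSup_lt_omega1 {ι : Type*} [Countable ι] {f : ι → Ordinal} (hf : ∀ i, f i < omega1) :
    ⨆ i, f i < omega1 := by
  rw [omega1_eq_omega_one] at hf ⊢
  exact iSup_lt_omega_one hf

lemma exists_closed_under_lt_omega1 {g : Ordinal → Ordinal} (hg : ∀ β < omega1, g β < omega1)
    {α : Ordinal} (hα : α < omega1) : ∃ γ, α < γ ∧ γ < omega1 ∧ ∀ β < γ, g β < γ := by
  let f : Ordinal → Ordinal := fun δ => ⨆ β : Set.Iio δ, succ (g β)
  have hf : ∀ δ < omega1, f δ < omega1 := fun δ hδ =>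
    have := (countable_Iio_of_lt_omega1 hδ).to_subtype
    iSup_lt_omega1 fun β => isSuccLimit_omega1.succ_lt (hg β (β.2.trans hδ))
  refine ⟨nfp f (succ α), (lt_succ α).trans_le (le_nfp f _), ?_, fun β hβ => ?_⟩
  · rw [omega1_eq_omega_one] at hf hα ⊢
    exact nfp_lt_ord (by simp) hf ((isSuccLimit_omega 1).succ_lt hα)
  · obtain ⟨n, hn⟩ := lt_nfp_iff.1 hβ
    calc g β < succ (g β) := lt_succ _
      _ ≤ f (f^[n] (succ α)) := Ordinal.le_iSup (fun β : Set.Iio _ => succ (g β)) ⟨β, hn⟩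
      _ = f^[n + 1] (succ α) := (Function.iterate_succ_apply' f n _).symm
      _ ≤ nfp f (succ α) := iterate_le_nfp f _ _

lemma IsClubIn.mem_of_forall_exists_lt {C : Set Ordinal} {o γ : Ordinal} (hC : IsClubIn C o)
    (hγo : γ < o) (hγ : γ ≠ 0) (h : ∀ β < γ, ∃ δ ∈ C, β < δ ∧ δ < γ) : γ ∈ C := by
  have hS : (C ∩ Set.Iio γ).Nonempty := by
    obtain ⟨δ, hδC, -, hδγ⟩ := h 0 (pos_iff_ne_zero.2 hγ)
    exact ⟨δ, hδC, hδγ⟩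
  have hbdd : BddAbove (C ∩ Set.Iio γ) := ⟨γ, fun δ hδ => hδ.2.le⟩
  convert hC.2.1 _ Set.inter_subset_left hS ⟨γ, hγo, fun δ hδ => hδ.2.le⟩
  refine le_antisymm (le_of_forall_lt fun β hβ => ?_) (csSup_le hS fun δ hδ => hδ.2.le)
  obtain ⟨δ, hδC, hβδ, hδγ⟩ := h β hβ
  exact hβδ.trans_le (le_csSup hbdd ⟨hδC, hδγ⟩)

lemma IsClubIn.exists_isSuccLimit_mem_closed_under {C : Set Ordinal} (hC : IsClubIn C omega1)
    {g : Ordinal → Ordinal} (hg : ∀ β < omega1, g β < omega1) :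
    ∃ γ ∈ C, IsSuccLimit γ ∧ ∀ β < γ, g β < γ := by
  have hCω := hC.1
  choose! next hnextC hnext using hC.2.2
  obtain ⟨γ, hγ0, hγω, hγ⟩ := exists_closed_under_lt_omega1 (g := fun β => max (g β) (next β))
    (fun β hβ => max_lt (hg β hβ) (hCω _ (hnextC β hβ))) isSuccLimit_omega1.bot_lt
  have hnextγ : ∀ β < γ, next β < γ := fun β hβ => (le_max_right _ _).trans_lt (hγ β hβ)
  refine ⟨γ, hC.mem_of_forall_exists_lt hγω hγ0.ne'
    fun β hβ => ⟨next β, hnextC β (hβ.trans hγω), hnext β (hβ.trans hγω), hnextγ β hβ⟩,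
    isSuccLimit_iff.2 ⟨hγ0.ne', isSuccPrelimit_iff_succ_lt.2 fun β hβ => ?_⟩,
    fun β hβ => (le_max_left _ _).trans_lt (hγ β hβ)⟩
  exact (succ_le_of_lt (hnext β (hβ.trans hγω))).trans_lt (hnextγ β hβ)

namespace Aleph1Free

variable {G H : Type*} [AddCommGroup G] [AddCommGroup H]

lemma of_injective (hH : Aleph1Free H) (f : G →+ H) (hf : Function.Injective f) :
    Aleph1Free G := fun K _ =>
  let e := K.equivMapOfInjective f hf
  have : Countable (K.map f) := e.symm.injective.countable
  have := hH (K.map f) this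
  Module.Free.of_equiv e.symm.toIntLinearEquiv

lemma quotient_ker (hH : Aleph1Free H) (f : G →+ H) : Aleph1Free (G ⧸ f.ker) :=
  hH.of_injective (QuotientAddGroup.kerLift f) (QuotientAddGroup.kerLift_injective f)

lemma finsupp_of_linearIndependent (hH : Aleph1Free H) {κ : Type*} {v : κ → H}
    (hv : LinearIndependent ℤ v) : Aleph1Free (κ →₀ ℤ) :=
  hH.of_injective (Finsupp.linearCombination ℤ v).toAddMonoidHom hv

lemma quotient_closure_image_basis (hH : Aleph1Free H) {ι : Type*} (b : Module.Basis ι ℤ H)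
    (t : Set ι) : Aleph1Free (H ⧸ AddSubgroup.closure (b '' t)) := by
  let φ : H →ₗ[ℤ] (↥tᶜ →₀ ℤ) := Finsupp.lsubtypeDomain tᶜ ∘ₗ b.repr.toLinearMap
  have hker : φ.toAddMonoidHom.ker = AddSubgroup.closure (b '' t) := by
    ext x
    rw [← Submodule.span_int_eq_addSubgroupClosure, Submodule.mem_toAddSubgroup,
      b.mem_span_image, Finsupp.support_subset_iff, AddMonoidHom.mem_ker]
    exact Finsupp.subtypeDomain_eq_zero_iff'
  rw [← hker]
  exact (hH.finsupp_of_linearIndependent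
    (b.linearIndependent.comp _ Subtype.coe_injective)).quotient_ker _

end Aleph1Free

namespace IsAleph1Filtration

variable {H : Type*} [AddCommGroup H] {F G : Ordinal → AddSubgroup H}

lemma exists_le_of_countable (hF : IsAleph1Filtration F) (K : AddSubgroup H) [Countable K] :
    ∃ β < omega1, K ≤ F β := by
  choose a ha hxa using fun x : K => hF.2.2.2 x
  refine ⟨⨆ x, a x, iSup_lt_omega1 ha, fun x hx => ?_⟩
  exact hF.2.1 _ _ (Ordinal.le_iSup a ⟨x, hx⟩) (iSup_lt_omega1 ha) (hxa ⟨x, hx⟩)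

lemma le_of_forall_lt_le (hF : IsAleph1Filtration F) (hG : IsAleph1Filtration G)
    {γ : Ordinal} (hγ : γ < omega1) (hlim : IsSuccLimit γ) (next : Ordinal → Ordinal)
    (hnext : ∀ β < γ, next β < γ) (hle : ∀ β < γ, F β ≤ G (next β)) : F γ ≤ G γ := by
  intro x hx
  obtain ⟨β, hβγ, hxβ⟩ := (hF.2.2.1 γ hγ hlim x).1 hx
  exact hG.2.1 _ _ (hnext β hβγ).le hγ (hle β hβγ hxβ)

theorem exists_mem_club_eq (hF : IsAleph1Filtration F) (hG : IsAleph1Filtration G)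
    {C : Set Ordinal} (hC : IsClubIn C omega1) : ∃ γ ∈ C, F γ = G γ := by
  have hstep : ∀ α < omega1, ∃ β < omega1, F α ≤ G β ∧ G α ≤ F β := by
    intro α hα
    have := hF.1 α hα
    have := hG.1 α hα
    obtain ⟨β₁, hβ₁, hFG⟩ := hG.exists_le_of_countable (F α)
    obtain ⟨β₂, hβ₂, hGF⟩ := hF.exists_le_of_countable (G α)
    exact ⟨max β₁ β₂, max_lt hβ₁ hβ₂, hFG.trans (hG.2.1 _ _ (le_max_left _ _) (max_lt hβ₁ hβ₂)),
      hGF.trans (hF.2.1 _ _ (le_max_right _ _) (max_lt hβ₁ hβ₂))⟩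
  choose! next hnext hFG hGF using hstep
  obtain ⟨γ, hγC, hlim, hγ⟩ := hC.exists_isSuccLimit_mem_closed_under hnext
  have hγω := hC.1 γ hγC
  refine ⟨γ, hγC, le_antisymm ?_ ?_⟩
  · exact hF.le_of_forall_lt_le hG hγω hlim next hγ fun β hβ => hFG β (hβ.trans hγω)
  · exact hG.le_of_forall_lt_le hF hγω hlim next hγ fun β hβ => hGF β (hβ.trans hγω)

end IsAleph1Filtration

section ClosureFiltration

variable {H ι : Type*} [AddCommGroup H] (s : ι → H) (idx : ι → Ordinal)

lemma countable_addSubgroupClosure {S : Set H} (hS : S.Countable) :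
    Countable (AddSubgroup.closure S) := by
  have := hS.to_subtype
  have hrange : (Set.range (Finsupp.linearCombination ℤ ((↑) : S → H)) : Set H) =
      AddSubgroup.closure S := by
    rw [← Submodule.span_int_eq_addSubgroupClosure, Submodule.coe_toAddSubgroup,
      ← LinearMap.coe_range, Finsupp.range_linearCombination, Subtype.range_coe]
  exact (hrange ▸ Set.countable_range _ : (AddSubgroup.closure S : Set H).Countable).to_subtype

lemma mem_closure_image_lt_iff {γ : Ordinal} (hγ : IsSuccLimit γ) {x : H} :
    x ∈ AddSubgroup.closure (s '' {i | idx i < γ}) ↔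
      ∃ β < γ, x ∈ AddSubgroup.closure (s '' {i | idx i < β}) := by
  have mono : ∀ {β β'}, β ≤ β' → AddSubgroup.closure (s '' {i | idx i < β}) ≤
      AddSubgroup.closure (s '' {i | idx i < β'}) := fun h =>
    AddSubgroup.closure_mono (Set.image_mono fun i hi => lt_of_lt_of_le hi h)
  refine ⟨fun hx => ?_, fun ⟨β, hβ, hx⟩ => mono hβ.le hx⟩
  induction hx using AddSubgroup.closure_induction with
  | mem y hy =>
    obtain ⟨i, hi, rfl⟩ := hy
    exact ⟨succ (idx i), hγ.succ_lt hi, AddSubgroup.subset_closure ⟨i, lt_succ (idx i), rfl⟩⟩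
  | zero => exact ⟨0, hγ.bot_lt, zero_mem _⟩
  | add y z _ _ hy hz =>
    obtain ⟨β, hβ, hy⟩ := hy
    obtain ⟨β', hβ', hz⟩ := hz
    exact ⟨max β β', max_lt hβ hβ',
      add_mem (mono (le_max_left _ _) hy) (mono (le_max_right _ _) hz)⟩
  | neg y _ hy =>
    obtain ⟨β, hβ, hy⟩ := hy
    exact ⟨β, hβ, neg_mem hy⟩

lemma isAleph1Filtration_closure_image (hs : AddSubgroup.closure (Set.range s) = ⊤)
    (hinj : Function.Injective idx) (hidx : ∀ i, idx i < omega1) :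
    IsAleph1Filtration fun α => AddSubgroup.closure (s '' {i | idx i < α}) := by
  refine ⟨fun α hα => countable_addSubgroupClosure
      (((countable_Iio_of_lt_omega1 hα).preimage hinj).image s),
    fun α β hαβ _ => AddSubgroup.closure_mono (Set.image_mono fun i hi => lt_of_lt_of_le hi hαβ),
    fun γ _ hγ x => mem_closure_image_lt_iff s idx hγ, fun x => ?_⟩
  have hx : x ∈ AddSubgroup.closure (s '' {i | idx i < omega1}) := by
    simp [hidx, Set.image_univ, hs]
  exact (mem_closure_image_lt_iff s idx isSuccLimit_omega1).1 hx

end ClosureFiltration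

/-- If `E = {α < ω₁ : H/H_α is not ℵ₁-free}` contains a club
(i.e. `H` is turbid), then `H` is not free. -/
theorem not_free_of_turbid {H : Type*} [AddCommGroup H]
    (hH : Aleph1Free H) (hcard : Cardinal.mk H = Cardinal.aleph 1)
    (F : Ordinal → AddSubgroup H) (hF : IsAleph1Filtration F)
    (hturbid : ∃ C : Set Ordinal, IsClubIn C omega1 ∧
      C ⊆ {α : Ordinal | α < omega1 ∧ ¬ Aleph1Free (H ⧸ F α)}) :
    ¬ Module.Free ℤ H := by
  intro _
  obtain ⟨C, hC, hCE⟩ := hturbid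
  let b := Module.Free.chooseBasis ℤ H
  have hb : AddSubgroup.closure (Set.range b) = ⊤ := by
    rw [← Submodule.span_int_eq_addSubgroupClosure, b.span_eq, Submodule.top_toAddSubgroup]
  obtain ⟨idx, hinj, hidx⟩ := exists_injective_lt_omega1 (hcard ▸ mk_le_of_injective b.injective)
  obtain ⟨γ, hγC, hFG⟩ :=
    hF.exists_mem_club_eq (isAleph1Filtration_closure_image b idx hb hinj hidx) hC
  exact (hCE hγC).2 (hFG ▸ hH.quotient_closure_image_basis b _)
end

section
/- Let H be an ℵ₁-free abelian group and let K be a pure subgroup of H of finite torsion-free rank (for example, the purification ⟨F⟩_* of the subgroup generated by a finite subset F of H). Then H/K is ℵ₁-free. -/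
/-- A subgroup `K` of `H` is pure if whenever `n • h ∈ K` with `n ≠ 0`, already `h ∈ K`. -/
def IsPureSubgroup {H : Type*} [AddCommGroup H] (K : AddSubgroup H) : Prop :=
  ∀ n : ℤ, n ≠ 0 → ∀ h : H, n • h ∈ K → h ∈ K

/-!
A countable subgroup `L` of `H ⧸ K` is the image of a countable subgroup `M` of `H`, which is free,
so `L ≅ M ⧸ (M ∩ K)`. The kernel `M ∩ K` is a countable subgroup of `H` of rank at most that of
`K`, hence free of finite rank, i.e. finitely generated, and `L` is torsion-free because `K` is
pure. Over a PID, a free module `M` modulo a finitely generated `N` with torsion-free quotient is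
free: `N` lies in the span `A` of finitely many basis vectors, the other basis vectors span a
complement `B`, and `M ⧸ N ≅ (A ⧸ N) × B` with `A ⧸ N` finitely generated and torsion-free.
-/

namespace Submodule

variable {R M : Type*} [Ring R] [AddCommGroup M] [Module R M]

noncomputable def quotientEquivProdOfLeOfIsCompl {N A B : Submodule R M} (hNA : N ≤ A)
    (hAB : IsCompl A B) : (M ⧸ N) ≃ₗ[R] (A ⧸ N.comap A.subtype) × B :=
  let f :=
    ((N.comap A.subtype).mkQ ∘ₗ A.projectionOnto B hAB).prod (B.projectionOnto A hAB.symm)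
  have hker : LinearMap.ker f = N := by
    ext x
    simp only [f, LinearMap.mem_ker, LinearMap.prod_apply, Function.prod, Prod.mk_eq_zero,
      LinearMap.comp_apply, mkQ_apply, Quotient.mk_eq_zero, mem_comap, subtype_apply,
      projectionOnto_apply_eq_zero_iff]
    refine ⟨fun ⟨hx, hxA⟩ => ?_, fun hx => ⟨?_, hNA hx⟩⟩
    · rwa [projectionOnto_apply_of_mem_left _ hxA] at hx
    · rwa [projectionOnto_apply_of_mem_left _ (hNA hx)]
  have hf : Function.Surjective f := by
    rintro ⟨a, b⟩
    obtain ⟨a, rfl⟩ := mkQ_surjective _ a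
    exact ⟨a + b, by simp [f]⟩
  (quotEquivOfEq _ _ hker.symm).trans (f.quotKerEquivOfSurjective hf)

theorem isTorsionFree_quotient_comap_subtype (N A : Submodule R M)
    [Module.IsTorsionFree R (M ⧸ N)] : Module.IsTorsionFree R (A ⧸ N.comap A.subtype) := by
  refine Function.Injective.moduleIsTorsionFree (mapQ _ N A.subtype le_rfl) ?_ (map_smul _)
  rw [← LinearMap.ker_eq_bot, ker_mapQ, mkQ_map_self]

end Submodule

open Submodule in
theorem Module.Basis.exists_finset_le_span_image {R M ι : Type*} [Semiring R] [AddCommMonoid M]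
    [Module R M] (b : Basis ι R M) {N : Submodule R M} (hN : N.FG) :
    ∃ s : Finset ι, N ≤ span R (b '' (s : Set ι)) := by
  have hle : N ≤ ⨆ i, R ∙ b i := by rw [← span_range_eq_iSup, b.span_eq]; exact le_top
  obtain ⟨s, hs⟩ := CompleteLattice.IsCompactElement.exists_finset_of_le_iSup _
    ((fg_iff_compact N).mp hN) _ hle
  exact ⟨s, by rwa [span_eq_iSup_of_singleton_spans, iSup_image]⟩

open Submodule in
theorem Module.free_quotient_of_fg {R M : Type*} [CommRing R] [IsDomain R]
    [IsPrincipalIdealRing R] [AddCommGroup M] [Module R M] [Module.Free R M]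
    {N : Submodule R M} (hN : N.FG) [Module.IsTorsionFree R (M ⧸ N)] :
    Module.Free R (M ⧸ N) := by
  let b := Module.Free.chooseBasis R M
  obtain ⟨s, hs⟩ := b.exists_finset_le_span_image hN
  have hAB := b.linearIndependent.isCompl_span_image b.span_eq (isCompl_compl (x := (s : Set _)))
  have : Module.Finite R (span R (b '' s)) :=
    Module.Finite.span_of_finite R (s.finite_toSet.image b)
  have := N.isTorsionFree_quotient_comap_subtype (span R (b '' s))
  have : Module.Free R (span R (b '' (↑s)ᶜ)) := by
    rw [Set.image_eq_range]
    exact .of_basis (.span (b.linearIndependent.comp _ Subtype.val_injective))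
  exact Module.Free.of_equiv (quotientEquivProdOfLeOfIsCompl hs hAB).symm

theorem Module.free_of_surjective_of_fg_ker {R M Q : Type*} [CommRing R] [IsDomain R]
    [IsPrincipalIdealRing R] [AddCommGroup M] [Module R M] [Module.Free R M] [AddCommGroup Q]
    [Module R Q] [Module.IsTorsionFree R Q] (f : M →ₗ[R] Q) (hf : Function.Surjective f)
    (hker : (LinearMap.ker f).FG) : Module.Free R Q := by
  let e := f.quotKerEquivOfSurjective hf
  have : Module.IsTorsionFree R (M ⧸ LinearMap.ker f) :=
    e.injective.moduleIsTorsionFree _ (map_smul e)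
  have := Module.free_quotient_of_fg hker
  exact .of_equiv e

theorem Aleph1Free.of_injective_s13 {G H : Type*} [AddCommGroup G] [AddCommGroup H]
    (hH : Aleph1Free H) (f : G →+ H) (hf : Function.Injective f) : Aleph1Free G := by
  intro L hL
  let e := L.equivMapOfInjective f hf
  have : Module.Free ℤ (L.map f) := hH _ (Countable.of_equiv _ e.toEquiv)
  exact Module.Free.of_equiv e.toIntLinearEquiv.symm

theorem IsPureSubgroup.isAddTorsionFree_quotient {H : Type*} [AddCommGroup H]
    {K : AddSubgroup H} (hK : IsPureSubgroup K) : IsAddTorsionFree (H ⧸ K) := by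
  rw [← Module.isTorsionFree_int_iff_isAddTorsionFree]
  refine .of_smul_eq_zero fun n x hnx => or_iff_not_imp_left.mpr fun hn => ?_
  induction x using QuotientAddGroup.induction_on with
  | H x =>
    rw [← QuotientAddGroup.mk_zsmul, QuotientAddGroup.eq_zero_iff] at hnx
    exact (QuotientAddGroup.eq_zero_iff x).mpr (hK n hn x hnx)

theorem AddMonoidHom.exists_countable_map_eq {G G' : Type*} [AddCommGroup G] [AddGroup G']
    {f : G →+ G'} (hf : Function.Surjective f) (L : AddSubgroup G') [Countable L] :
    ∃ M : AddSubgroup G, Countable M ∧ M.map f = L := by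
  choose g hg using fun l : L => hf l
  refine ⟨.closure (Set.range g), ?_, ?_⟩
  · rw [← Submodule.span_int_eq_addSubgroupClosure]
    exact (inferInstance : Countable (Submodule.span ℤ (Set.range g)))
  rw [AddMonoidHom.map_closure, ← Set.range_comp, show f ∘ g = (↑) from funext hg,
    Subtype.range_coe, AddSubgroup.closure_eq]

theorem AddMonoidHom.rank_ker_addSubgroupMap_le {G G' : Type*} [AddCommGroup G]
    [AddCommGroup G'] (f : G →+ G') (M : AddSubgroup G) :
    Module.rank ℤ (LinearMap.ker (f.addSubgroupMap M).toIntLinearMap) ≤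
      Module.rank ℤ f.ker := by
  let i : LinearMap.ker (f.addSubgroupMap M).toIntLinearMap →ₗ[ℤ] f.ker.toIntSubmodule :=
    LinearMap.codRestrict _ (M.subtype.toIntLinearMap ∘ₗ Submodule.subtype _) fun x =>
      congrArg Subtype.val x.2
  exact i.rank_le_of_injective fun x y hxy => Subtype.ext (Subtype.ext congr(($hxy).1))

/-- If `H` is ℵ₁-free and `K` is a pure subgroup of finite torsion-free
rank, then `H/K` is ℵ₁-free. -/
theorem aleph1Free_quotient_by_pure_finite_rank {H : Type*} [AddCommGroup H]
    (hH : Aleph1Free H) (K : AddSubgroup H) (hpure : IsPureSubgroup K)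
    (hrank : Module.rank ℤ K < Cardinal.aleph0) :
    Aleph1Free (H ⧸ K) := by
  intro L hL
  obtain ⟨M, hM, rfl⟩ :=
    AddMonoidHom.exists_countable_map_eq (QuotientAddGroup.mk'_surjective K) L
  have : Module.Free ℤ M := hH M hM
  have : IsAddTorsionFree (H ⧸ K) := hpure.isAddTorsionFree_quotient
  let f := ((QuotientAddGroup.mk' K).addSubgroupMap M).toIntLinearMap
  have : Module.Free ℤ (LinearMap.ker f) :=
    hH.of_injective_s13 M.subtype Subtype.val_injective (LinearMap.ker f).toAddSubgroup inferInstance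
  have hker_rank : Module.rank ℤ (LinearMap.ker f) < Cardinal.aleph0 := by
    refine ((QuotientAddGroup.mk' K).rank_ker_addSubgroupMap_le M).trans_lt ?_
    rwa [QuotientAddGroup.ker_mk']
  refine Module.free_of_surjective_of_fg_ker f (AddMonoidHom.addSubgroupMap_surjective _ M) ?_
  rwa [← Module.Finite.iff_fg, ← Module.rank_lt_aleph0_iff]
end
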